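/- arXiv:2605.06141 — 5 statements merged into one kernel-verified Lean document; each statement's English description precedes it below -/
import Mathlib

section
/- Let f : ℝ^d → ℝ and h : ℝ^d → ℝ^m be differentiable, let J_h(x) ∈ ℝ^{m×d} denote the Jacobian of h at x, let C, Ω ∈ ℝ^{m×m} with C symmetric, and fix step sizes η_x > 0 and η_d > 0. Let (x_t^H, μ_t^H) be generated by the hybrid method ALG(C,Ω): μ_{t+1}^H = μ_t^H + η_d h(x_t^H) + Ω(h(x_t^H) − h(x_{t−1}^H)) and x_{t+1}^H = x_t^H − η_x[∇f(x_t^H) + J_h(x_t^H)ᵀ(μ_{t+1}^H + C h(x_t^H))], and let (x_t^P, ν_t^P) be generated by the pure optimistic method ALG(0, C+Ω): ν_{t+1}^P = ν_t^P + η_d h(x_t^P) + (C+Ω)(h(x_t^P) − h(x_{t−1}^P)) and x_{t+1}^P = x_t^P − η_x[∇f(x_t^P) + J_h(x_t^P)ᵀ ν_{t+1}^P]. If x_{−1}^P = x_{−1}^H, x_0^P = x_0^H, and ν_0^P = μ_0^H + C h(x_{−1}^H), then for every t ≥ 0 one has x_t^P = x_t^H and ν_t^P = μ_t^H + C h(x_{t−1}^H);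 in particular, the two methods generate identical primal trajectories. -/
open Matrix

/-- `prevSeq x xm1 t` is the value of the sequence at time `t - 1`,
where `xm1` is the value at time `-1`. -/
def prevSeq {α : Type*} (x : ℕ → α) (xm1 : α) : ℕ → α
  | 0 => xm1
  | (n + 1) => x n

/-- Matrix-valued augmented--optimistic equivalence: the hybrid method `ALG(C, Ω)`
and the pure optimistic method `ALG(0, C + Ω)` generate identical primal
trajectories under matched effective-dual initialization. -/
theorem hybrid_pure_optimistic_equivalence
    {d m : ℕ}
    (f : (Fin d → ℝ) → ℝ) (h : (Fin d → ℝ) → (Fin m → ℝ))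
    (gradf : (Fin d → ℝ) → (Fin d → ℝ))
    (Jh : (Fin d → ℝ) → Matrix (Fin m) (Fin d) ℝ)
    (hf : Differentiable ℝ f) (hh : Differentiable ℝ h)
    (hgradf : ∀ x v, fderiv ℝ f x v = gradf x ⬝ᵥ v)
    (hJh : ∀ x v, fderiv ℝ h x v = (Jh x) *ᵥ v)
    (C Ω : Matrix (Fin m) (Fin m) ℝ) (hC : C.IsSymm)
    (ηx ηd : ℝ) (hηx : 0 < ηx) (hηd : 0 < ηd)
    -- hybrid trajectory ALG(C, Ω)
    (xH : ℕ → Fin d → ℝ) (μH : ℕ → Fin m → ℝ) (xHm1 : Fin d → ℝ)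
    (hμH : ∀ t, μH (t + 1)
        = μH t + ηd • h (xH t) + Ω *ᵥ (h (xH t) - h (prevSeq xH xHm1 t)))
    (hxH : ∀ t, xH (t + 1)
        = xH t - ηx • (gradf (xH t) + (Jh (xH t))ᵀ *ᵥ (μH (t + 1) + C *ᵥ h (xH t))))
    -- pure optimistic trajectory ALG(0, C + Ω)
    (xP : ℕ → Fin d → ℝ) (νP : ℕ → Fin m → ℝ) (xPm1 : Fin d → ℝ)
    (hνP : ∀ t, νP (t + 1)
        = νP t + ηd • h (xP t) + (C + Ω) *ᵥ (h (xP t) - h (prevSeq xP xPm1 t)))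
    (hxP : ∀ t, xP (t + 1)
        = xP t - ηx • (gradf (xP t) + (Jh (xP t))ᵀ *ᵥ νP (t + 1)))
    -- initialization
    (hinit_m1 : xPm1 = xHm1)
    (hinit_0 : xP 0 = xH 0)
    (hinit_dual : νP 0 = μH 0 + C *ᵥ h xHm1) :
    ∀ t : ℕ, xP t = xH t ∧ νP t = μH t + C *ᵥ h (prevSeq xH xHm1 t) := by
  have key : ∀ t : ℕ, xP t = xH t ∧ prevSeq xP xPm1 t = prevSeq xH xHm1 t ∧
      νP t = μH t + C *ᵥ h (prevSeq xH xHm1 t) := by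
    intro t
    induction t with
    | zero => exact ⟨hinit_0, hinit_m1, by simpa [prevSeq] using hinit_dual⟩
    | succ n ih =>
      obtain ⟨hx, hprev, hν⟩ := ih
      have hν' : νP (n + 1) = μH (n + 1) + C *ᵥ h (prevSeq xH xHm1 (n + 1)) := by
        rw [hνP n, hμH n, hν, hx, hprev]
        simp only [prevSeq, add_mulVec, mulVec_sub]
        abel
      refine ⟨?_, hx, hν'⟩
      rw [hxP n, hxH n, hx, hν']
      simp [prevSeq]
  exact fun t => ⟨(key t).1, (key t).2.2⟩
end

section
/- Let f : ℝ^d → ℝ and h : ℝ^d → ℝ^m be differentiable, let C_1, Ω_1, C_2, Ω_2 ∈ ℝ^{m×m} with C_1 and C_2 symmetric and C_1 + Ω_1 = C_2 + Ω_2, and fix step sizes η_x > 0 and η_d > 0. Let (x_t^{(1)}, μ_t^{(1)}) be generated by ALG(C_1, Ω_1) and (x_t^{(2)}, μ_t^{(2)}) by ALG(C_2, Ω_2). If the methods share the same primal history x_{−1}^{(1)} = x_{−1}^{(2)} and x_0^{(1)} = x_0^{(2)}, and the effective dual variables are initialized consistently, i.e. μ_0^{(1)} + C_1 h(x_{−1}^{(1)})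 = μ_0^{(2)} + C_2 h(x_{−1}^{(2)}), then x_t^{(1)} = x_t^{(2)} for every t ≥ 0. -/
open Matrix

/-- Additivity of matrix-valued correction: two hybrid methods `ALG(C₁, Ω₁)` and
`ALG(C₂, Ω₂)` with `C₁ + Ω₁ = C₂ + Ω₂`, the same primal history, and consistently
initialized effective dual variables generate identical primal trajectories. -/
theorem additivity_of_matrix_correction
    {d m : ℕ}
    (f : (Fin d → ℝ) → ℝ) (h : (Fin d → ℝ) → (Fin m → ℝ))
    (gradf : (Fin d → ℝ) → (Fin d → ℝ))
    (Jh : (Fin d → ℝ) → Matrix (Fin m) (Fin d) ℝ)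
    (hf : Differentiable ℝ f) (hh : Differentiable ℝ h)
    (hgradf : ∀ x v, fderiv ℝ f x v = gradf x ⬝ᵥ v)
    (hJh : ∀ x v, fderiv ℝ h x v = (Jh x) *ᵥ v)
    (C₁ Ω₁ C₂ Ω₂ : Matrix (Fin m) (Fin m) ℝ)
    (hC₁ : C₁.IsSymm) (hC₂ : C₂.IsSymm)
    (hsum : C₁ + Ω₁ = C₂ + Ω₂)
    (ηx ηd : ℝ) (hηx : 0 < ηx) (hηd : 0 < ηd)
    -- trajectory of ALG(C₁, Ω₁)
    (x₁ : ℕ → Fin d → ℝ) (μ₁ : ℕ → Fin m → ℝ) (x₁m1 : Fin d → ℝ)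
    (hμ₁ : ∀ t, μ₁ (t + 1)
        = μ₁ t + ηd • h (x₁ t) + Ω₁ *ᵥ (h (x₁ t) - h (prevSeq x₁ x₁m1 t)))
    (hx₁ : ∀ t, x₁ (t + 1)
        = x₁ t - ηx • (gradf (x₁ t) + (Jh (x₁ t))ᵀ *ᵥ (μ₁ (t + 1) + C₁ *ᵥ h (x₁ t))))
    -- trajectory of ALG(C₂, Ω₂)
    (x₂ : ℕ → Fin d → ℝ) (μ₂ : ℕ → Fin m → ℝ) (x₂m1 : Fin d → ℝ)
    (hμ₂ : ∀ t, μ₂ (t + 1)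
        = μ₂ t + ηd • h (x₂ t) + Ω₂ *ᵥ (h (x₂ t) - h (prevSeq x₂ x₂m1 t)))
    (hx₂ : ∀ t, x₂ (t + 1)
        = x₂ t - ηx • (gradf (x₂ t) + (Jh (x₂ t))ᵀ *ᵥ (μ₂ (t + 1) + C₂ *ᵥ h (x₂ t))))
    -- shared primal history
    (hinit_m1 : x₁m1 = x₂m1)
    (hinit_0 : x₁ 0 = x₂ 0)
    -- consistent effective-dual initialization
    (hinit_dual : μ₁ 0 + C₁ *ᵥ h x₁m1 = μ₂ 0 + C₂ *ᵥ h x₂m1) :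
    ∀ t : ℕ, x₁ t = x₂ t := by
  have key : ∀ t : ℕ, x₁ t = x₂ t ∧ prevSeq x₁ x₁m1 t = prevSeq x₂ x₂m1 t ∧
      μ₁ t + C₁ *ᵥ h (prevSeq x₁ x₁m1 t) = μ₂ t + C₂ *ᵥ h (prevSeq x₂ x₂m1 t) := by
    intro t
    induction t with
    | zero => exact ⟨hinit_0, hinit_m1, hinit_dual⟩
    | succ n ih =>
      obtain ⟨hx, hp, he⟩ := ih
      have hdual : μ₁ (n + 1) + C₁ *ᵥ h (x₁ n) = μ₂ (n + 1) + C₂ *ᵥ h (x₂ n) := by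
        have e1 : μ₁ (n + 1) + C₁ *ᵥ h (x₁ n)
            = (μ₁ n + C₁ *ᵥ h (prevSeq x₁ x₁m1 n)) + ηd • h (x₁ n)
              + (C₁ + Ω₁) *ᵥ (h (x₁ n) - h (prevSeq x₁ x₁m1 n)) := by
          simp only [hμ₁ n, add_mulVec, Matrix.mulVec_sub]
          abel
        have e2 : μ₂ (n + 1) + C₂ *ᵥ h (x₂ n)
            = (μ₂ n + C₂ *ᵥ h (prevSeq x₂ x₂m1 n)) + ηd • h (x₂ n)
              + (C₂ + Ω₂) *ᵥ (h (x₂ n) - h (prevSeq x₂ x₂m1 n)) := by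
          simp only [hμ₂ n, add_mulVec, Matrix.mulVec_sub]
          abel
        rw [e1, e2, he, hx, hp, hsum]
      refine ⟨?_, hx, ?_⟩
      · rw [hx] at hdual
        rw [hx₁ n, hx₂ n, hx, hdual]
      · simpa [prevSeq] using hdual
  exact fun t => (key t).1
end

section
/- Let f : ℝ^d → ℝ and h : ℝ^d → ℝ^m be differentiable, let M, C_1, C_2 ∈ ℝ^{m×m} with M = C_1 + C_2, and fix step sizes η_x > 0, η_d > 0. Let P_n be a coordinate projection matrix on ℝ^m (onto the noisy residual coordinates) and let ε_t ∈ ℝ^m be any noise sequence with ε_t = P_n ε_t, and assume C_2 P_n = 0 (equivalently C_2 ε_t = 0 for all t). Define noisy residuals ĥ_t = h(x_t) + ε_t evaluated along each trajectory. Let (x_t^A, λ_t^A) follow the full augmented method λ_{t+1}^A = λ_t^A + η_d ĥ_t^A, x_{t+1}^A = x_t^A − η_x[∇f(x_t^A) + J_h(x_t^A)ᵀ(λ_{t+1}^A + M h(x_t^A))], and let (x_t^H, μ_t^H) follow the hybrid method μ_{t+1}^H = μ_t^H + η_d ĥ_t^H + C_2(ĥ_t^H − ĥ_{t−1}^H),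 x_{t+1}^H = x_t^H − η_x[∇f(x_t^H) + J_h(x_t^H)ᵀ(μ_{t+1}^H + C_1 h(x_t^H))], where both trajectories use the same noise realization ε_t. If x_{−1}^A = x_{−1}^H, x_0^A = x_0^H, and μ_0^H = λ_0^A + C_2 h(x_{−1}^A), then for every t ≥ 0 one has x_t^H = x_t^A and μ_t^H = λ_t^A + C_2 h(x_{t−1}^A). -/
open Matrix

/-- Hybrid--augmented-Lagrangian equivalence under partial residual-memory noise:
if the residual-memory noise is supported on coordinates annihilated by the
optimistic clean-channel matrix `C₂` (i.e. `ε_t = Pₙ ε_t` and `C₂ Pₙ = 0`), then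
the hybrid method with split `(C₁, C₂)` and the full augmented method with
`M = C₁ + C₂` generate identical primal trajectories for every realization of
the noise, under matched effective-dual initialization. -/
theorem hybrid_aug_equivalence_partial_noise
    {d m : ℕ}
    (f : (Fin d → ℝ) → ℝ) (h : (Fin d → ℝ) → (Fin m → ℝ))
    (gradf : (Fin d → ℝ) → (Fin d → ℝ))
    (Jh : (Fin d → ℝ) → Matrix (Fin m) (Fin d) ℝ)
    (hf : Differentiable ℝ f) (hh : Differentiable ℝ h)
    (hgradf : ∀ x v, fderiv ℝ f x v = gradf x ⬝ᵥ v)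
    (hJh : ∀ x v, fderiv ℝ h x v = (Jh x) *ᵥ v)
    (M C₁ C₂ : Matrix (Fin m) (Fin m) ℝ)
    (hM : M = C₁ + C₂)
    (ηx ηd : ℝ) (hηx : 0 < ηx) (hηd : 0 < ηd)
    -- the coordinate projection onto the noisy residual coordinates
    (S : Finset (Fin m))
    (Pn : Matrix (Fin m) (Fin m) ℝ)
    (hPn : Pn = Matrix.diagonal (fun i => if i ∈ S then (1 : ℝ) else 0))
    -- the residual-memory noise, supported on the noisy coordinates
    (ε : ℕ → Fin m → ℝ) (εm1 : Fin m → ℝ)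
    (hε : ∀ t, Pn *ᵥ ε t = ε t) (hεm1 : Pn *ᵥ εm1 = εm1)
    -- the clean channel annihilates the noisy coordinates
    (hC₂Pn : C₂ * Pn = 0)
    -- full augmented trajectory (dual update uses noisy residual memory,
    -- augmented primal correction uses the exact current residual)
    (xA : ℕ → Fin d → ℝ) (lamA : ℕ → Fin m → ℝ) (xAm1 : Fin d → ℝ)
    (hlamA : ∀ t, lamA (t + 1) = lamA t + ηd • (h (xA t) + ε t))
    (hxA : ∀ t, xA (t + 1)
        = xA t - ηx • (gradf (xA t) + (Jh (xA t))ᵀ *ᵥ (lamA (t + 1) + M *ᵥ h (xA t))))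
    -- hybrid trajectory (optimistic memory uses noisy stored residuals,
    -- augmented correction uses the exact current residual)
    (xH : ℕ → Fin d → ℝ) (μH : ℕ → Fin m → ℝ) (xHm1 : Fin d → ℝ)
    (hμH : ∀ t, μH (t + 1)
        = μH t + ηd • (h (xH t) + ε t)
          + C₂ *ᵥ ((h (xH t) + ε t)
              - prevSeq (fun n => h (xH n) + ε n) (h xHm1 + εm1) t))
    (hxH : ∀ t, xH (t + 1)
        = xH t - ηx • (gradf (xH t) + (Jh (xH t))ᵀ *ᵥ (μH (t + 1) + C₁ *ᵥ h (xH t))))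
    -- initialization
    (hinit_m1 : xAm1 = xHm1)
    (hinit_0 : xA 0 = xH 0)
    (hinit_dual : μH 0 = lamA 0 + C₂ *ᵥ h xAm1) :
    ∀ t : ℕ, xH t = xA t ∧ μH t = lamA t + C₂ *ᵥ h (prevSeq xA xAm1 t) := by
  have hC2 : ∀ v : Fin m → ℝ, Pn *ᵥ v = v → C₂ *ᵥ v = 0 := by
    intro v hv
    calc C₂ *ᵥ v = C₂ *ᵥ (Pn *ᵥ v) := by rw [hv]
      _ = (C₂ * Pn) *ᵥ v := by rw [Matrix.mulVec_mulVec]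
      _ = 0 := by rw [hC₂Pn, Matrix.zero_mulVec]
  have key : ∀ t, xH t = xA t ∧ μH t = lamA t + C₂ *ᵥ h (prevSeq xA xAm1 t)
      ∧ prevSeq xH xHm1 t = prevSeq xA xAm1 t := by
    intro t
    induction t with
    | zero =>
        refine ⟨hinit_0.symm, ?_, ?_⟩
        · simpa [prevSeq] using hinit_dual
        · simpa [prevSeq] using hinit_m1.symm
    | succ t ih =>
        obtain ⟨hx, hμ, hp⟩ := ih
        have hεt : C₂ *ᵥ ε t = 0 := hC2 _ (hε t)
        have hεp : C₂ *ᵥ prevSeq ε εm1 t = 0 := by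
          cases t with
          | zero => exact hC2 _ hεm1
          | succ n => exact hC2 _ (hε n)
        have hpnoisy : prevSeq (fun n => h (xH n) + ε n) (h xHm1 + εm1) t
            = h (prevSeq xA xAm1 t) + prevSeq ε εm1 t := by
          cases t with
          | zero => simp [prevSeq, hinit_m1]
          | succ n =>
              have hxn : xH n = xA n := by simpa [prevSeq] using hp
              simp [prevSeq, hxn]
        have hμ' : μH (t + 1) = lamA (t + 1) + C₂ *ᵥ h (xA t) := by
          rw [hμH t, hlamA t, hμ, hpnoisy, hx]
          simp only [Matrix.mulVec_add, Matrix.mulVec_sub, hεt, hεp]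
          abel
        refine ⟨?_, ?_, ?_⟩
        · rw [hxH t, hxA t, hx, hμ', hM, Matrix.add_mulVec]
          have : lamA (t + 1) + C₂ *ᵥ h (xA t) + C₁ *ᵥ h (xA t)
              = lamA (t + 1) + (C₁ *ᵥ h (xA t) + C₂ *ᵥ h (xA t)) := by abel
          rw [this]
        · simpa [prevSeq, hx] using hμ'
        · simpa [prevSeq] using hx
  exact fun t => ⟨(key t).1, (key t).2.1⟩
end

section
/- Let f : ℝ^d → ℝ and h : ℝ^d → ℝ^m be differentiable with Jacobian J_h, let C, Ω ∈ ℝ^{m×m} with C symmetric, and fix η_x > 0, η_d > 0. For each t, let G_t : ℝ^d → ℝ^d be an arbitrary (possibly noisy) primal-gradient oracle and Y_t : ℝ^d → ℝ^m an arbitrary (possibly noisy) residual oracle, the same oracles for both methods. Let (x_t^H, μ_t^H) follow the noisy hybrid method μ_{t+1}^H = μ_t^H + η_d Y_t(x_t^H) + Ω(Y_t(x_t^H) − Y_{t−1}(x_{t−1}^H)), x_{t+1}^H = x_t^H − η_x[G_t(x_t^H) + J_h(x_t^H)ᵀ(μ_{t+1}^H + C Y_t(x_t^H))], and let (x_t^P,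 ν_t^P) follow the noisy pure optimistic method ν_{t+1}^P = ν_t^P + η_d Y_t(x_t^P) + (C+Ω)(Y_t(x_t^P) − Y_{t−1}(x_{t−1}^P)), x_{t+1}^P = x_t^P − η_x[G_t(x_t^P) + J_h(x_t^P)ᵀ ν_{t+1}^P]. If x_{−1}^P = x_{−1}^H, x_0^P = x_0^H, and ν_0^P = μ_0^H + C Y_{−1}(x_{−1}^H), then for every t ≥ 0 one has x_t^P = x_t^H and ν_t^P = μ_t^H + C Y_{t−1}(x_{t−1}^H); in particular, the two noisy methods generate identical primal trajectories for every realization of the oracles. -/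
open Matrix

/-- Additivity under shared oracle noise: with arbitrary (possibly noisy) primal
gradient oracles `G t` and residual oracles `Y t` (the same oracles for both
methods, `Ym1` playing the role of `Y₋₁`), the noisy hybrid method `ALG(C, Ω)`
and the noisy pure optimistic method `ALG(0, C + Ω)` generate identical primal
trajectories under matched effective-dual initialization. -/
theorem additivity_under_shared_oracle_noise
    {d m : ℕ}
    (f : (Fin d → ℝ) → ℝ) (h : (Fin d → ℝ) → (Fin m → ℝ))
    (Jh : (Fin d → ℝ) → Matrix (Fin m) (Fin d) ℝ)
    (hf : Differentiable ℝ f) (hh : Differentiable ℝ h)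
    (hJh : ∀ x v, fderiv ℝ h x v = (Jh x) *ᵥ v)
    (C Ω : Matrix (Fin m) (Fin m) ℝ) (hC : C.IsSymm)
    (ηx ηd : ℝ) (hηx : 0 < ηx) (hηd : 0 < ηd)
    -- the oracles, shared by both methods
    (G : ℕ → (Fin d → ℝ) → (Fin d → ℝ))
    (Y : ℕ → (Fin d → ℝ) → (Fin m → ℝ))
    (Ym1 : (Fin d → ℝ) → (Fin m → ℝ))
    -- noisy hybrid trajectory ALG(C, Ω)
    (xH : ℕ → Fin d → ℝ) (μH : ℕ → Fin m → ℝ) (xHm1 : Fin d → ℝ)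
    (hμH : ∀ t, μH (t + 1)
        = μH t + ηd • Y t (xH t)
          + Ω *ᵥ (Y t (xH t) - prevSeq (fun n => Y n (xH n)) (Ym1 xHm1) t))
    (hxH : ∀ t, xH (t + 1)
        = xH t - ηx • (G t (xH t) + (Jh (xH t))ᵀ *ᵥ (μH (t + 1) + C *ᵥ Y t (xH t))))
    -- noisy pure optimistic trajectory ALG(0, C + Ω)
    (xP : ℕ → Fin d → ℝ) (νP : ℕ → Fin m → ℝ) (xPm1 : Fin d → ℝ)
    (hνP : ∀ t, νP (t + 1)
        = νP t + ηd • Y t (xP t)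
          + (C + Ω) *ᵥ (Y t (xP t) - prevSeq (fun n => Y n (xP n)) (Ym1 xPm1) t))
    (hxP : ∀ t, xP (t + 1)
        = xP t - ηx • (G t (xP t) + (Jh (xP t))ᵀ *ᵥ νP (t + 1)))
    -- initialization
    (hinit_m1 : xPm1 = xHm1)
    (hinit_0 : xP 0 = xH 0)
    (hinit_dual : νP 0 = μH 0 + C *ᵥ Ym1 xHm1) :
    ∀ t : ℕ, xP t = xH t
      ∧ νP t = μH t + C *ᵥ prevSeq (fun n => Y n (xH n)) (Ym1 xHm1) t := by
  intro t
  induction t using Nat.strong_induction_on with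
  | _ t ih =>
    match t with
    | 0 =>
      refine ⟨hinit_0, ?_⟩
      simpa [prevSeq] using hinit_dual
    | t + 1 =>
      obtain ⟨hx, hν⟩ := ih t (Nat.lt_succ_self t)
      have hprev : prevSeq (fun n => Y n (xP n)) (Ym1 xPm1) t
          = prevSeq (fun n => Y n (xH n)) (Ym1 xHm1) t := by
        match t with
        | 0 => simp [prevSeq, hinit_m1]
        | n + 1 =>
          have hxn : xP n = xH n := (ih n (by omega)).1
          simp [prevSeq, hxn]
      have hν' : νP (t + 1) = μH (t + 1) + C *ᵥ Y t (xH t) := by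
        rw [hνP t, hμH t, hν, hx, hprev, Matrix.add_mulVec, Matrix.mulVec_sub,
          Matrix.mulVec_sub]
        abel
      refine ⟨?_, by simpa [prevSeq] using hν'⟩
      rw [hxP t, hxH t, hx, hν']
end

section
/- Let B ∈ ℝ^{m×n} have full column rank (rank B = n, with m ≥ n), let H ∈ ℝ^{n×n} be symmetric, let R ∈ ℝ^{m×m} be symmetric positive definite, and let δ > 0. Let L = (BᵀB)⁻¹Bᵀ (the Moore–Penrose pseudoinverse of B, so that LB = I_n), define the cancellation matrix C_can = −Lᵀ H L, let λ_min(BᵀRB) denote the smallest eigenvalue of the symmetric positive definite matrix BᵀRB, set α = δ / λ_min(BᵀRB), and set M = C_can + α R. Then H + Bᵀ M B = α BᵀRB, and H + Bᵀ M B − δ I_n is positive semidefinite. -/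
/-!
Since `L B = 1`, the congruence `X ↦ Bᵀ X B` sends `Lᵀ H L` back to `H`, so the cancellation term
removes `H` exactly and leaves `α BᵀRB`. Full column rank makes `BᵀB` invertible and `BᵀRB`
positive definite, so `λ_min > 0` and `α BᵀRB - δ I = α (BᵀRB - λ_min I)`, which is positive
semidefinite because every eigenvalue of `BᵀRB` is at least `λ_min`.
-/

open Matrix
open scoped MatrixOrder

namespace Matrix

variable {m n K : Type*} [Fintype n]

theorem mulVec_injective_of_rank_eq_card [Field K] {B : Matrix m n K}
    (h : B.rank = Fintype.card n) : Function.Injective B.mulVec :=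
  mulVec_injective_iff.mpr <| linearIndependent_iff_card_eq_finrank_span.mpr <| by
    rw [Set.finrank, ← rank_eq_finrank_span_cols, h]

variable [Fintype m] [DecidableEq n]

theorem transpose_mul_conj_mul_cancel [CommSemiring K] {L : Matrix n m K} {B : Matrix m n K}
    (hLB : L * B = 1) (H : Matrix n n K) : Bᵀ * (Lᵀ * H * L) * B = H := by
  calc Bᵀ * (Lᵀ * H * L) * B = (L * B)ᵀ * H * (L * B) := by
        simp only [transpose_mul, Matrix.mul_assoc]
    _ = H := by rw [hLB, transpose_one, Matrix.one_mul, Matrix.mul_one]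

theorem IsHermitian.posSemidef_sub_smul_one {A : Matrix n n ℝ} (hA : A.IsHermitian) {c : ℝ}
    (h : ∀ x ∈ spectrum ℝ A, c ≤ x) : (A - c • 1).PosSemidef := by
  rw [← le_iff, ← Algebra.algebraMap_eq_smul_one]
  exact (algebraMap_le_iff_le_spectrum hA.isSelfAdjoint).mpr h

end Matrix

theorem closed_form_target_curvature_general
    {m n : ℕ}
    (B : Matrix (Fin m) (Fin n) ℝ)
    (hrank : B.rank = n)
    (H : Matrix (Fin n) (Fin n) ℝ)
    (R : Matrix (Fin m) (Fin m) ℝ) (hR : R.PosDef)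
    (δ : ℝ) (hδ : 0 < δ)
    (lam : ℝ) (hlam : IsLeast (spectrum ℝ (Bᵀ * R * B)) lam) :
    H + Bᵀ * (-(((Bᵀ * B)⁻¹ * Bᵀ)ᵀ * H * ((Bᵀ * B)⁻¹ * Bᵀ)) + (δ / lam) • R) * B
        = (δ / lam) • (Bᵀ * R * B)
      ∧ (H + Bᵀ * (-(((Bᵀ * B)⁻¹ * Bᵀ)ᵀ * H * ((Bᵀ * B)⁻¹ * Bᵀ)) + (δ / lam) • R) * B
          - δ • (1 : Matrix (Fin n) (Fin n) ℝ)).PosSemidef := by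
  have hB : Function.Injective B.mulVec :=
    mulVec_injective_of_rank_eq_card (by rw [hrank, Fintype.card_fin])
  have hBtB : (Bᵀ * B).PosDef := by
    simpa only [conjTranspose_eq_transpose_of_trivial] using PosDef.conjTranspose_mul_self B hB
  have hS : (Bᵀ * R * B).PosDef := by
    simpa only [conjTranspose_eq_transpose_of_trivial] using hR.conjTranspose_mul_mul_same hB
  have hLB : (Bᵀ * B)⁻¹ * Bᵀ * B = 1 := by
    rw [Matrix.mul_assoc, nonsing_inv_mul _ hBtB.det_pos.ne'.isUnit]
  have hlam_pos : 0 < lam := hS.isStrictlyPositive.spectrum_pos hlam.1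
  have heq : H + Bᵀ * (-(((Bᵀ * B)⁻¹ * Bᵀ)ᵀ * H * ((Bᵀ * B)⁻¹ * Bᵀ)) + (δ / lam) • R) * B
      = (δ / lam) • (Bᵀ * R * B) := by
    rw [Matrix.mul_add, Matrix.add_mul, Matrix.mul_neg, Matrix.neg_mul,
      transpose_mul_conj_mul_cancel hLB, add_neg_cancel_left, Matrix.mul_smul, Matrix.smul_mul]
  refine ⟨heq, ?_⟩
  have hfactor : (δ / lam) • (Bᵀ * R * B) - δ • 1 = (δ / lam) • (Bᵀ * R * B - lam • 1) := by
    rw [smul_sub, smul_smul, div_mul_cancel₀ δ hlam_pos.ne']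
  rw [heq, hfactor]
  exact (hS.isHermitian.posSemidef_sub_smul_one hlam.2).smul (div_pos hδ hlam_pos).le

/-- Target-curvature guarantee of the closed-form design: with `B` of full column
rank, `H` symmetric, `R` symmetric positive definite, `L = (BᵀB)⁻¹Bᵀ` the
pseudoinverse left inverse of `B`, cancellation matrix `C_can = -LᵀHL`,
`α = δ / λ_min(BᵀRB)` and `M = C_can + αR`, one has
`H + BᵀMB = α BᵀRB` and `H + BᵀMB - δI ⪰ 0`. -/
theorem closed_form_target_curvature
    {m n : ℕ}
    (B : Matrix (Fin m) (Fin n) ℝ)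
    (hmn : n ≤ m) (hrank : B.rank = n)
    (H : Matrix (Fin n) (Fin n) ℝ) (hH : H.IsSymm)
    (R : Matrix (Fin m) (Fin m) ℝ) (hR : R.PosDef)
    (δ : ℝ) (hδ : 0 < δ)
    (lam : ℝ) (hlam : IsLeast (spectrum ℝ (Bᵀ * R * B)) lam) :
    H + Bᵀ * (-(((Bᵀ * B)⁻¹ * Bᵀ)ᵀ * H * ((Bᵀ * B)⁻¹ * Bᵀ)) + (δ / lam) • R) * B
        = (δ / lam) • (Bᵀ * R * B)
      ∧ (H + Bᵀ * (-(((Bᵀ * B)⁻¹ * Bᵀ)ᵀ * H * ((Bᵀ * B)⁻¹ * Bᵀ)) + (δ / lam) • R) * B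
          - δ • (1 : Matrix (Fin n) (Fin n) ℝ)).PosSemidef :=
  closed_form_target_curvature_general B hrank H R hR δ hδ lam hlam
end
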